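/- Let Q be a real symmetric n×n matrix, block partitioned with symmetric diagonal blocks Q[i][i], that is strictly block diagonally dominant: λ_min(Q[i][i]) > Σ_{j≠i} ‖Q[i][j]‖_2 for all i ∈ [N]. Then Q is positive definite, and moreover λ_min(Q) ≥ min_{i∈[N]} ( λ_min(Q[i][i]) - Σ_{j≠i} ‖Q[i][j]‖_2 ). -/

import Mathlib

open Matrix BigOperators Finset

noncomputable def specNorm {𝕜 : Type*} [RCLike 𝕜] {m n : Type*} [Fintype m] [Fintype n]
    [DecidableEq m] [DecidableEq n] (A : Matrix m n 𝕜) : ℝ :=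
  ‖LinearMap.toContinuousLinearMap (Matrix.toEuclideanLin A)‖

noncomputable def minEig {n : Type*} [Fintype n] [DecidableEq n] (A : Matrix n n ℝ) : ℝ :=
  sInf {μ : ℝ | (A - μ • 1).det = 0}

noncomputable def maxEig {n : Type*} [Fintype n] [DecidableEq n] (A : Matrix n n ℝ) : ℝ :=
  sSup {μ : ℝ | (A - μ • 1).det = 0}

def blk {N : ℕ} {d : Fin N → ℕ}
    (B : Matrix ((i : Fin N) × Fin (d i)) ((i : Fin N) × Fin (d i)) ℝ) (i j : Fin N) :
    Matrix (Fin (d i)) (Fin (d j)) ℝ := fun a b => B ⟨i, a⟩ ⟨j, b⟩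

noncomputable def eNorm {k : ℕ} (v : Fin k → ℝ) : ℝ := Real.sqrt (∑ a, v a ^ 2)

noncomputable def blockVecNorm {N : ℕ} {d : Fin N → ℕ}
    (x : ((i : Fin N) × Fin (d i)) → ℝ) : ℝ :=
  ⨆ i, eNorm (fun a => x ⟨i, a⟩)

noncomputable def blockOpNorm {N : ℕ} {d : Fin N → ℕ}
    (B : Matrix ((i : Fin N) × Fin (d i)) ((i : Fin N) × Fin (d i)) ℝ) : ℝ :=
  sInf {c | 0 ≤ c ∧ ∀ x, blockVecNorm (B.mulVec x) ≤ c * blockVecNorm x}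

/-!
Every real eigenvalue `μ` of `Q`, with eigenvector `v`, dominates some margin
`λ_min(Q[i][i]) - Σ_{j ≠ i} ‖Q[i][j]‖₂`: take the block `i` where `‖v_i‖` is largest and pair
the `i`-th block row of `Q v = μ v` with `v_i`. The diagonal term is at least
`λ_min(Q[i][i]) ‖v_i‖²` and, by Cauchy–Schwarz, each off-diagonal term is at least
`-‖Q[i][j]‖₂ ‖v_i‖ ‖v_j‖ ≥ -‖Q[i][j]‖₂ ‖v_i‖²`.
Since `Q` is symmetric, `λ_min(Q)` is the least of these eigenvalues and positive definiteness
is positivity of all of them.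
-/

section Eigenvalues

variable {n : Type*} [Fintype n] [DecidableEq n]

theorem Matrix.setOf_det_sub_smul_one_eq_zero {K : Type*} [Field K] (A : Matrix n n K) :
    {μ : K | (A - μ • 1).det = 0} = spectrum K A := by
  ext μ
  rw [Set.mem_ofPred_eq, spectrum.mem_iff, isUnit_iff_isUnit_det, isUnit_iff_ne_zero, not_not,
    Algebra.algebraMap_eq_smul_one, ← neg_sub, det_neg, mul_eq_zero,
    or_iff_right (pow_ne_zero _ (neg_ne_zero.2 one_ne_zero))]

theorem minEig_eq_sInf_spectrum (A : Matrix n n ℝ) : minEig A = sInf (spectrum ℝ A) := by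
  rw [minEig, Matrix.setOf_det_sub_smul_one_eq_zero]

theorem minEig_le {A : Matrix n n ℝ} {μ : ℝ} (hμ : μ ∈ spectrum ℝ A) : minEig A ≤ μ := by
  rw [minEig_eq_sInf_spectrum]
  exact csInf_le Matrix.finite_real_spectrum.bddBelow hμ

theorem le_minEig [Nonempty n] {A : Matrix n n ℝ} (hA : A.IsHermitian) {c : ℝ}
    (h : ∀ μ ∈ spectrum ℝ A, c ≤ μ) : c ≤ minEig A := by
  rw [minEig_eq_sInf_spectrum]
  exact le_csInf (hA.spectrum_real_eq_range_eigenvalues ▸ Set.range_nonempty _) h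

theorem minEig_of_isEmpty [IsEmpty n] (A : Matrix n n ℝ) : minEig A = 0 := by
  rw [minEig_eq_sInf_spectrum, spectrum.of_subsingleton, Real.sInf_empty]

theorem minEig_mul_dotProduct_self_le {A : Matrix n n ℝ} (hA : A.IsHermitian) (x : n → ℝ) :
    minEig A * (x ⬝ᵥ x) ≤ x ⬝ᵥ A *ᵥ x := by
  have hpsd : (A - minEig A • 1).PosSemidef := by
    refine posSemidef_iff_isHermitian_and_spectrum_nonneg.2
      ⟨hA.sub (isHermitian_one.smul (.all _)), ?_⟩
    rw [← Algebra.algebraMap_eq_smul_one, ← spectrum.sub_singleton_eq]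
    rintro _ ⟨μ, hμ, _, rfl, rfl⟩
    exact sub_nonneg.2 (minEig_le hμ)
  simpa [sub_mulVec, smul_mulVec, dotProduct_smul] using hpsd.dotProduct_mulVec_nonneg x

theorem Matrix.exists_mulVec_eq_smul_of_mem_spectrum {K : Type*} [Field K] {A : Matrix n n K}
    {μ : K} (hμ : μ ∈ spectrum K A) : ∃ v ≠ 0, A *ᵥ v = μ • v := by
  rw [← spectrum_toLin'] at hμ
  obtain ⟨v, hv⟩ := (Module.End.HasEigenvalue.of_mem_spectrum hμ).exists_hasEigenvector
  exact ⟨v, hv.2, Module.End.mem_eigenspace_iff.1 hv.1⟩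

end Eigenvalues

theorem EuclideanSpace.norm_toLp_eq_sqrt_dotProduct {ι : Type*} [Fintype ι] (v : ι → ℝ) :
    ‖WithLp.toLp 2 v‖ = √(v ⬝ᵥ v) := by
  rw [norm_eq_sqrt_real_inner, EuclideanSpace.inner_eq_star_dotProduct, star_trivial]

theorem specNorm_nonneg {𝕜 : Type*} [RCLike 𝕜] {m n : Type*} [Fintype m] [Fintype n]
    [DecidableEq m] [DecidableEq n] (A : Matrix m n 𝕜) : 0 ≤ specNorm A :=
  norm_nonneg _

theorem abs_dotProduct_mulVec_le_specNorm {m n : Type*} [Fintype m] [Fintype n] [DecidableEq m]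
    [DecidableEq n] (A : Matrix m n ℝ) (x : m → ℝ) (y : n → ℝ) :
    |x ⬝ᵥ A *ᵥ y| ≤ specNorm A * √(x ⬝ᵥ x) * √(y ⬝ᵥ y) := by
  have hinner : x ⬝ᵥ A *ᵥ y = inner ℝ (WithLp.toLp 2 x) (toEuclideanLin A (WithLp.toLp 2 y)) := by
    rw [EuclideanSpace.inner_eq_star_dotProduct, star_trivial, dotProduct_comm]
    simp
  rw [hinner, ← EuclideanSpace.norm_toLp_eq_sqrt_dotProduct x,
    ← EuclideanSpace.norm_toLp_eq_sqrt_dotProduct y]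
  calc _ ≤ ‖WithLp.toLp 2 x‖ * ‖toEuclideanLin A (WithLp.toLp 2 y)‖ := abs_real_inner_le_norm _ _
    _ ≤ ‖WithLp.toLp 2 x‖ * (specNorm A * ‖WithLp.toLp 2 y‖) := by
      gcongr
      exact (LinearMap.toContinuousLinearMap (toEuclideanLin A)).le_opNorm _
    _ = _ := by ring

section Blocks

variable {N : ℕ} {d : Fin N → ℕ}

def blkVec (x : ((i : Fin N) × Fin (d i)) → ℝ) (i : Fin N) : Fin (d i) → ℝ :=
  fun a => x ⟨i, a⟩

theorem blkVec_mulVec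
    (Q : Matrix ((i : Fin N) × Fin (d i)) ((i : Fin N) × Fin (d i)) ℝ)
    (v : ((i : Fin N) × Fin (d i)) → ℝ) (i : Fin N) :
    blkVec (Q *ᵥ v) i = ∑ j, blk Q i j *ᵥ blkVec v j := by
  ext a
  simp [blkVec, blk, mulVec, dotProduct, Finset.sum_apply, Fintype.sum_sigma]

theorem blk_self_isSymm
    {Q : Matrix ((i : Fin N) × Fin (d i)) ((i : Fin N) × Fin (d i)) ℝ} (hQ : Q.IsSymm)
    (i : Fin N) : (blk Q i i).IsSymm :=
  funext₂ fun a b => hQ.apply ⟨i, a⟩ ⟨i, b⟩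

noncomputable def blockDomMargin
    (Q : Matrix ((i : Fin N) × Fin (d i)) ((i : Fin N) × Fin (d i)) ℝ) (i : Fin N) : ℝ :=
  minEig (blk Q i i) - ∑ j ∈ univ.erase i, specNorm (blk Q i j)

theorem exists_blockDomMargin_le_of_mulVec_eq_smul
    {Q : Matrix ((i : Fin N) × Fin (d i)) ((i : Fin N) × Fin (d i)) ℝ}
    (hQ : ∀ i, (blk Q i i).IsHermitian) {v : ((i : Fin N) × Fin (d i)) → ℝ} (hv : v ≠ 0)
    {μ : ℝ} (hμ : Q *ᵥ v = μ • v) : ∃ i, blockDomMargin Q i ≤ μ := by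
  set w : Fin N → ℝ := fun i => blkVec v i ⬝ᵥ blkVec v i
  obtain ⟨k, hk⟩ := Function.ne_iff.1 hv
  have : Nonempty (Fin N) := ⟨k.1⟩
  obtain ⟨i, hi⟩ := Finite.exists_max w
  have hwk : 0 < w k.1 := dotProduct_star_self_pos_iff.2 (Function.ne_iff.2 ⟨k.2, hk⟩)
  have hwi : 0 < w i := hwk.trans_le (hi k.1)
  refine ⟨i, le_of_mul_le_mul_right ?_ hwi⟩
  have hoff (j : Fin N) :
      -(specNorm (blk Q i j) * w i) ≤ blkVec v i ⬝ᵥ blk Q i j *ᵥ blkVec v j := by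
    have hsqrt : √(w j) ≤ √(w i) := Real.sqrt_le_sqrt (hi j)
    calc -(specNorm (blk Q i j) * w i) = -(specNorm (blk Q i j) * √(w i) * √(w i)) := by
          rw [mul_assoc, Real.mul_self_sqrt hwi.le]
      _ ≤ -(specNorm (blk Q i j) * √(w i) * √(w j)) := by
          have := specNorm_nonneg (blk Q i j)
          gcongr
      _ ≤ _ := neg_le_of_abs_le (abs_dotProduct_mulVec_le_specNorm _ _ _)
  calc blockDomMargin Q i * w i
        = minEig (blk Q i i) * w i + ∑ j ∈ univ.erase i, -(specNorm (blk Q i j) * w i) := by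
          rw [blockDomMargin, sub_mul, sum_mul, sum_neg_distrib, sub_eq_add_neg]
    _ ≤ blkVec v i ⬝ᵥ blk Q i i *ᵥ blkVec v i
          + ∑ j ∈ univ.erase i, blkVec v i ⬝ᵥ blk Q i j *ᵥ blkVec v j :=
          add_le_add (minEig_mul_dotProduct_self_le (hQ i) _) (sum_le_sum fun j _ => hoff j)
    _ = blkVec v i ⬝ᵥ blkVec (Q *ᵥ v) i := by
          rw [blkVec_mulVec, dotProduct_sum, ← add_sum_erase _ _ (mem_univ i)]
    _ = μ * w i := by
          rw [hμ]
          exact dotProduct_smul _ _ _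

end Blocks

theorem bdd_implies_posdef_general {N : ℕ} {d : Fin N → ℕ}
    (Q : Matrix ((i : Fin N) × Fin (d i)) ((i : Fin N) × Fin (d i)) ℝ)
    (hQ : Q.IsSymm)
    (hdd : ∀ i, ∑ j ∈ Finset.univ.erase i, specNorm (blk Q i j) < minEig (blk Q i i)) :
    Q.PosDef ∧
      (⨅ i, (minEig (blk Q i i) - ∑ j ∈ Finset.univ.erase i, specNorm (blk Q i j)))
        ≤ minEig Q := by
  have hQH : Q.IsHermitian := isHermitian_iff_isSymm.2 hQ
  have hmargin {μ : ℝ} (hμ : μ ∈ spectrum ℝ Q) : ∃ i, blockDomMargin Q i ≤ μ := by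
    obtain ⟨v, hv, hQv⟩ := Matrix.exists_mulVec_eq_smul_of_mem_spectrum hμ
    exact exists_blockDomMargin_le_of_mulVec_eq_smul
      (fun i => isHermitian_iff_isSymm.2 (blk_self_isSymm hQ i)) hv hQv
  refine ⟨hQH.posDef_iff_eigenvalues_pos.2 fun k => ?_, ?_⟩
  · obtain ⟨i, hi⟩ := hmargin (hQH.eigenvalues_mem_spectrum_real k)
    exact (sub_pos.2 (hdd i)).trans_le hi
  change ⨅ i, blockDomMargin Q i ≤ minEig Q
  -- Without coordinates `minEig Q` is the junk value `sInf ∅ = 0`; then every block is empty and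
  -- every margin is `≤ 0`.
  rcases isEmpty_or_nonempty ((i : Fin N) × Fin (d i)) with hempty | _
  · rw [minEig_of_isEmpty]
    refine Real.iInf_nonpos fun i => ?_
    have : IsEmpty (Fin (d i)) := ⟨fun a => hempty.false ⟨i, a⟩⟩
    rw [blockDomMargin, minEig_of_isEmpty, zero_sub, neg_nonpos]
    exact sum_nonneg fun j _ => specNorm_nonneg _
  · refine le_minEig hQH fun μ hμ => ?_
    obtain ⟨i, hi⟩ := hmargin hμ
    exact (ciInf_le (Set.finite_range _).bddBelow i).trans hi

theorem bdd_implies_posdef {N : ℕ} (hN : 0 < N) {d : Fin N → ℕ}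
    (Q : Matrix ((i : Fin N) × Fin (d i)) ((i : Fin N) × Fin (d i)) ℝ)
    (hQ : Q.IsSymm)
    (hdd : ∀ i, ∑ j ∈ Finset.univ.erase i, specNorm (blk Q i j) < minEig (blk Q i i)) :
    Q.PosDef ∧
      (⨅ i, (minEig (blk Q i i) - ∑ j ∈ Finset.univ.erase i, specNorm (blk Q i j)))
        ≤ minEig Q :=
  bdd_implies_posdef_general Q hQ hdd
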